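/- arXiv:1304.4218 — 4 statements merged into one kernel-verified Lean document; each statement's English description precedes it below -/
import Mathlib

section
/- Let y be the sequence in which each term q^j (j ≥ 0) is repeated n times (n a positive integer) and suppose 1/(n+1) ≤ q < 1. Then the achievement set E(y) equals the interval [0, n/(1-q)]. -/
open Set

/-- The achievement set of a sequence: all subsums. -/
noncomputable def achievementSet (x : ℕ → ℝ) : Set ℝ :=
  {y | ∃ A : Set ℕ, y = ∑' n, A.indicator x n}

/-!
Kakeya's criterion: if `x` is nonnegative and summable and every term is at most the sum of the
terms after it, then the greedy algorithm expands every `t ∈ [0, ∑ x]` as a subsum. For the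
sequence listing each `q ^ j` `n` times, the tail after a term `q ^ a` dominates
`q ^ (a + 1) * n / (1 - q)`, which is at least `q ^ a` exactly when `q ≥ 1 / (n + 1)`.
-/

open Filter Topology

theorem achievementSet_subset_Icc_tsum {x : ℕ → ℝ} (hpos : ∀ i, 0 ≤ x i) (hsum : Summable x) :
    achievementSet x ⊆ Icc 0 (∑' i, x i) := by
  rintro _ ⟨A, rfl⟩
  have hle : ∀ i, A.indicator x i ≤ x i := indicator_le_self' fun i _ => hpos i
  exact ⟨tsum_nonneg (indicator_nonneg fun i _ => hpos i),
    (hsum.indicator A).tsum_le_tsum hle hsum⟩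

section Greedy

variable (x : ℕ → ℝ) (t : ℝ)

noncomputable def greedySum : ℕ → ℝ
  | 0 => 0
  | i + 1 => if greedySum i + x i ≤ t then greedySum i + x i else greedySum i

def greedySet : Set ℕ := {i | greedySum x t i + x i ≤ t}

theorem greedySum_succ (i : ℕ) :
    greedySum x t (i + 1) = greedySum x t i + (greedySet x t).indicator x i := by
  by_cases h : greedySum x t i + x i ≤ t
  · rw [greedySum, if_pos h, indicator_of_mem (show i ∈ greedySet x t from h)]
  · rw [greedySum, if_neg h, indicator_of_notMem (show i ∉ greedySet x t from h), add_zero]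

theorem sum_range_indicator_greedySet (i : ℕ) :
    ∑ j ∈ Finset.range i, (greedySet x t).indicator x j = greedySum x t i := by
  induction i with
  | zero => rfl
  | succ i ih => rw [Finset.sum_range_succ, ih, greedySum_succ]

variable {x t}

theorem greedySum_le (ht : 0 ≤ t) (i : ℕ) : greedySum x t i ≤ t := by
  induction i with
  | zero => exact ht
  | succ i ih =>
    rw [greedySum]
    split_ifs with h
    exacts [h, ih]

theorem le_greedySum_add_tsum_nat_add (hsum : Summable x)
    (htail : ∀ i, x i ≤ ∑' j, x (j + (i + 1))) (ht : t ≤ ∑' i, x i) (i : ℕ) :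
    t ≤ greedySum x t i + ∑' j, x (j + i) := by
  induction i with
  | zero => simpa [greedySum] using ht
  | succ i ih =>
    have hsplit : ∑' j, x (j + i) = x i + ∑' j, x (j + (i + 1)) := by
      rw [((summable_nat_add_iff i).2 hsum).tsum_eq_zero_add, zero_add]
      simp only [add_right_comm _ 1 i, add_assoc]
    rw [greedySum]
    split_ifs with h
    · linarith
    · linarith [htail i]

theorem hasSum_indicator_greedySet (hpos : ∀ i, 0 ≤ x i) (hsum : Summable x)
    (htail : ∀ i, x i ≤ ∑' j, x (j + (i + 1))) (ht : t ∈ Icc 0 (∑' i, x i)) :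
    HasSum ((greedySet x t).indicator x) t := by
  rw [hasSum_iff_tendsto_nat_of_nonneg (indicator_nonneg fun i _ => hpos i)]
  simp only [sum_range_indicator_greedySet]
  have hlower : Tendsto (fun i => t - ∑' j, x (j + i)) atTop (𝓝 t) := by
    simpa using tendsto_const_nhds.sub (tendsto_sum_nat_add x)
  refine tendsto_of_tendsto_of_tendsto_of_le_of_le hlower tendsto_const_nhds (fun i => ?_)
    (greedySum_le ht.1)
  linarith [le_greedySum_add_tsum_nat_add hsum htail ht.2 i]

end Greedy

theorem achievementSet_eq_Icc_tsum {x : ℕ → ℝ} (hpos : ∀ i, 0 ≤ x i) (hsum : Summable x)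
    (htail : ∀ i, x i ≤ ∑' j, x (j + (i + 1))) :
    achievementSet x = Icc 0 (∑' i, x i) := by
  refine (achievementSet_subset_Icc_tsum hpos hsum).antisymm fun t ht => ?_
  exact ⟨greedySet x t, (hasSum_indicator_greedySet hpos hsum htail ht).tsum_eq.symm⟩

theorem hasSum_pow_div {n : ℕ} (hn : 0 < n) {q : ℝ} (hq0 : 0 ≤ q) (hq1 : q < 1) :
    HasSum (fun i => q ^ (i / n)) (n / (1 - q)) := by
  have : NeZero n := ⟨hn.ne'⟩
  have hgeom := hasSum_geometric_of_lt_one hq0 hq1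
  have hones := hasSum_fintype (fun _ : Fin n => (1 : ℝ))
  have hprod := hgeom.mul hones
    (hgeom.summable.mul_of_nonneg hones.summable (fun _ => pow_nonneg hq0 _) fun _ => zero_le_one)
  rw [← (Nat.divModEquiv n).hasSum_iff] at hprod
  simpa [Function.comp_def, div_eq_inv_mul] using hprod

theorem Nat.add_succ_div_le (a b : ℕ) {n : ℕ} (hn : 0 < n) :
    (a + (b + 1)) / n ≤ a / n + (b / n + 1) := by
  rw [← Nat.lt_succ_iff, Nat.div_lt_iff_lt_mul hn]
  have ha := Nat.lt_mul_div_succ a hn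
  have hb := Nat.lt_mul_div_succ b hn
  nlinarith

theorem pow_div_le_tsum_nat_add {n : ℕ} (hn : 0 < n) {q : ℝ} (hq1 : 1 / (n + 1 : ℝ) ≤ q)
    (hq2 : q < 1) (i : ℕ) :
    q ^ (i / n) ≤ ∑' j, q ^ ((j + (i + 1)) / n) := by
  have hq0 : 0 < q := lt_of_lt_of_le (by positivity) hq1
  have hsum := hasSum_pow_div hn hq0.le hq2
  have hshift : ∀ j, q ^ (i / n + 1) * q ^ (j / n) ≤ q ^ ((j + (i + 1)) / n) := fun j => by
    rw [← pow_add]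
    exact pow_le_pow_of_le_one hq0.le hq2.le (by linarith [Nat.add_succ_div_le j i hn])
  have hkey : 1 ≤ q * (n / (1 - q)) := by
    rw [div_le_iff₀ (by positivity)] at hq1
    rw [mul_div_assoc', le_div_iff₀ (by linarith)]
    linarith
  calc q ^ (i / n) ≤ q ^ (i / n) * (q * (n / (1 - q))) := le_mul_of_one_le_right (by positivity) hkey
    _ = ∑' j, q ^ (i / n + 1) * q ^ (j / n) := by rw [tsum_mul_left, hsum.tsum_eq]; ring
    _ ≤ ∑' j, q ^ ((j + (i + 1)) / n) :=
      (hsum.summable.mul_left _).tsum_le_tsum hshift ((summable_nat_add_iff _).2 hsum.summable)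

theorem stmt10 (n : ℕ) (hn : 0 < n) (q : ℝ) (hq1 : 1 / (n + 1 : ℝ) ≤ q) (hq2 : q < 1) :
    achievementSet (fun i => q ^ (i / n)) = Set.Icc 0 ((n : ℝ) / (1 - q)) := by
  have hq0 : 0 < q := lt_of_lt_of_le (by positivity) hq1
  have hsum := hasSum_pow_div hn hq0.le hq2
  rw [achievementSet_eq_Icc_tsum (fun i => by positivity) hsum.summable
    (pow_div_le_tsum_nat_add hn hq1 hq2), hsum.tsum_eq]
end

section
/- Let x = (k₁,…,k_m; q) be a multigeometric sequence and let Σ = { Σ_{i=1}^m ε_i k_i : ε_i ∈ {0,1} } be the set of subset-sums of {k₁,…,k_m}. If 0 < q < 1/card(Σ), then the achievement set E(x) has empty interior (equivalently, Lebesgue measure zero). -/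
open Set

/-- The multigeometric sequence (k 0, …, k m ; q): term (j*(m+1)+r) is k r * q^j. -/
noncomputable def mgSeq (m : ℕ) (k : Fin (m + 1) → ℝ) (q : ℝ) (n : ℕ) : ℝ :=
  k ⟨n % (m + 1), Nat.mod_lt _ (Nat.succ_pos m)⟩ * q ^ (n / (m + 1))

/-!
Cutting a subsum after the first period of `m + 1` terms writes it as `s + q * t` with `s` a
subset sum of the `k i` and `t` again a subsum, so `E ⊆ Σ + q • E`: the bounded set `E` is covered
by `card Σ` copies of itself scaled by `q`. Hence `vol E ≤ card Σ * q * vol E`, and since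
`card Σ * q < 1` and `vol E < ∞`, `vol E = 0`; a null set has empty interior.
-/

open MeasureTheory Pointwise
open scoped ENNReal

theorem MeasureTheory.Measure.addHaar_eq_zero_of_subset_add_smul {V : Type*}
    [NormedAddCommGroup V] [NormedSpace ℝ V] [MeasurableSpace V] [BorelSpace V]
    [FiniteDimensional ℝ V] (μ : Measure V) [μ.IsAddHaarMeasure] {E : Set V} {S : Finset V}
    {q : ℝ} (hq : 0 ≤ q) (hSq : S.card * q ^ Module.finrank ℝ V < 1) (hE : μ E ≠ ∞)
    (hcover : E ⊆ ↑S + q • E) : μ E = 0 := by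
  set c := ENNReal.ofReal (S.card * q ^ Module.finrank ℝ V)
  have hle : μ E ≤ c * μ E :=
    calc μ E ≤ μ (⋃ s ∈ S, s +ᵥ q • E) := by
          rw [← iUnion_add_left_image] at hcover
          exact measure_mono hcover
      _ ≤ ∑ s ∈ S, μ (s +ᵥ q • E) := measure_biUnion_finset_le S _
      _ = c * μ E := by
          simp only [measure_vadd, μ.addHaar_smul_of_nonneg hq, Finset.sum_const, nsmul_eq_mul,
            c, ENNReal.ofReal_mul (Nat.cast_nonneg _), ENNReal.ofReal_natCast, mul_assoc]
  by_contra hE0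
  have hc : c < 1 := ENNReal.ofReal_lt_one.2 hSq
  exact (ENNReal.mul_lt_mul_iff_left hE0 hE |>.2 hc).not_ge (by simpa using hle)

theorem achievementSet_subset_Icc {x : ℕ → ℝ} (hx : ∀ n, 0 ≤ x n) (hsum : Summable x) :
    achievementSet x ⊆ Icc 0 (∑' n, x n) := by
  rintro y ⟨A, rfl⟩
  exact ⟨tsum_nonneg fun n => indicator_nonneg (fun i _ => hx i) n,
    (hsum.indicator A).tsum_le_tsum (fun n => indicator_le_self' (fun i _ => hx i) n) hsum⟩

theorem tsum_indicator_eq_sum_add_mul_tsum {x : ℕ → ℝ} {N : ℕ} {q : ℝ}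
    (hsum : Summable x) (hshift : ∀ n, x (n + N) = q * x n) (A : Set ℕ) :
    ∑' n, A.indicator x n
      = ∑ i ∈ Finset.range N, A.indicator x i + q * ∑' n, ((· + N) ⁻¹' A).indicator x n := by
  rw [← (hsum.indicator A).sum_add_tsum_nat_add N, ← tsum_mul_left]
  congr 1
  refine tsum_congr fun n => ?_
  by_cases h : n + N ∈ A
  · rw [indicator_of_mem h, indicator_of_mem (show n ∈ (· + N) ⁻¹' A from h), hshift]
  · rw [indicator_of_notMem h, indicator_of_notMem (show n ∉ (· + N) ⁻¹' A from h), mul_zero]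

noncomputable def subsetSums {ι : Type*} [Fintype ι] [DecidableEq ι] (k : ι → ℝ) : Finset ℝ :=
  Finset.univ.image fun ε : ι → Bool => ∑ i, if ε i then k i else 0

theorem subsetSums_nonempty {ι : Type*} [Fintype ι] [DecidableEq ι] (k : ι → ℝ) :
    (subsetSums k).Nonempty :=
  Finset.univ_nonempty.image _

section mgSeq

variable {m : ℕ} {k : Fin (m + 1) → ℝ} {q : ℝ}

theorem mgSeq_add_period (n : ℕ) : mgSeq m k q (n + (m + 1)) = q * mgSeq m k q n := by
  simp only [mgSeq, Nat.add_mod_right, Nat.add_div_right _ (Nat.succ_pos m), pow_succ]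
  ring

theorem mgSeq_coe_fin (i : Fin (m + 1)) : mgSeq m k q i = k i := by
  simp only [mgSeq, Nat.mod_eq_of_lt i.isLt, Nat.div_eq_of_lt i.isLt, pow_zero, mul_one, Fin.eta]

theorem mgSeq_divModEquiv_symm (p : ℕ × Fin (m + 1)) :
    mgSeq m k q ((Nat.divModEquiv (m + 1)).symm p) = k p.2 * q ^ p.1 := by
  have hdiv : (p.1 * (m + 1) + p.2) / (m + 1) = p.1 := by
    rw [Nat.mul_comm, Nat.mul_add_div (Nat.succ_pos m), Nat.div_eq_of_lt p.2.isLt, Nat.add_zero]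
  simp only [Nat.divModEquiv_symm_apply, mgSeq, Nat.mul_add_mod_of_lt p.2.isLt, hdiv, Fin.eta]

theorem mgSeq_nonneg (hk : ∀ i, 0 ≤ k i) (hq0 : 0 ≤ q) (n : ℕ) : 0 ≤ mgSeq m k q n :=
  mul_nonneg (hk _) (pow_nonneg hq0 _)

theorem mgSeq_summable (hk : ∀ i, 0 ≤ k i) (hq0 : 0 ≤ q) (hq1 : q < 1) :
    Summable (mgSeq m k q) := by
  rw [← (Nat.divModEquiv (m + 1)).symm.summable_iff]
  have hnonneg (p : ℕ × Fin (m + 1)) : 0 ≤ k p.2 * q ^ p.1 := by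
    rw [← mgSeq_divModEquiv_symm]
    exact mgSeq_nonneg hk hq0 _
  simp only [Function.comp_def, mgSeq_divModEquiv_symm]
  refine (summable_prod_of_nonneg hnonneg).2 ⟨fun _ => Summable.of_finite, ?_⟩
  simp only [tsum_fintype, ← Finset.sum_mul]
  exact (summable_geometric_of_lt_one hq0 hq1).mul_left _

theorem achievementSet_mgSeq_subset (hsum : Summable (mgSeq m k q)) :
    achievementSet (mgSeq m k q) ⊆ ↑(subsetSums k) + q • achievementSet (mgSeq m k q) := by
  classical
  rintro _ ⟨A, rfl⟩
  rw [tsum_indicator_eq_sum_add_mul_tsum hsum mgSeq_add_period A, ← Fin.sum_univ_eq_sum_range]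
  refine add_mem_add ?_ (smul_mem_smul_set ⟨_, rfl⟩)
  refine Finset.mem_image.2 ⟨fun i => decide ((i : ℕ) ∈ A), Finset.mem_univ _, ?_⟩
  refine Finset.sum_congr rfl fun i _ => ?_
  by_cases h : (i : ℕ) ∈ A <;> simp [h, mgSeq_coe_fin]

end mgSeq

theorem stmt12_general (m : ℕ) (k : Fin (m + 1) → ℕ) (q : ℝ) (hq0 : 0 < q)
    (hq : q < 1 / ((Finset.univ.image
      (fun ε : Fin (m + 1) → Bool => ∑ i, if ε i then (k i : ℝ) else 0)).card : ℝ)) :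
    interior (achievementSet (mgSeq m (fun i => (k i : ℝ)) q)) = ∅ := by
  have hcard : (1 : ℝ) ≤ (subsetSums fun i => (k i : ℝ)).card := by
    exact_mod_cast (subsetSums_nonempty _).card_pos
  have hSq : (subsetSums fun i => (k i : ℝ)).card * q < 1 := by
    rw [lt_div_iff₀ (by positivity), mul_comm] at hq
    exact hq
  have hq1 : q < 1 := by nlinarith
  have hsum := mgSeq_summable (fun i => Nat.cast_nonneg (k i)) hq0.le hq1
  have hbdd := achievementSet_subset_Icc (mgSeq_nonneg (fun i => Nat.cast_nonneg (k i)) hq0.le) hsum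
  refine volume.interior_eq_empty_of_null
    (volume.addHaar_eq_zero_of_subset_add_smul hq0.le (by simpa using hSq) ?_
      (achievementSet_mgSeq_subset hsum))
  exact ne_top_of_le_ne_top (by simp) (measure_mono hbdd)

theorem stmt12 (m : ℕ) (k : Fin (m + 1) → ℕ) (hpos : ∀ i, 0 < k i) (q : ℝ) (hq0 : 0 < q)
    (hq : q < 1 / ((Finset.univ.image
      (fun ε : Fin (m + 1) → Bool => ∑ i, if ε i then (k i : ℝ) else 0)).card : ℝ)) :
    interior (achievementSet (mgSeq m (fun i => (k i : ℝ)) q)) = ∅ :=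
  stmt12_general m k q hq0 hq
end

section
/- For every integer k ≥ 1, the achievement set of the multigeometric sequence x_k = (3, 2, …, 2; 1/(2k+2)) with k twos contains the interval [3,4]. -/
open Set

/-!
Put `b = 2k + 2`. A single block `(3, 2, …, 2)` has the subsums `3δ + 2a` with `a ≤ k`, which
include every digit in `{0, 2, 3, …, b - 1, b + 1}`. Peeling off the last digit `N mod b` (with a
residue `1` replaced by `b + 1` and a borrow from the quotient) shows by induction that every
integer `N` with `3bⁿ - 1 ≤ N < 4bⁿ` is `∑ⱼ cⱼ bⁿ⁻ʲ` with such digits, so `N / bⁿ` is a finite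
subsum of the sequence. These points are dense in `[3, 4]`, and the achievement set is closed,
being the continuous image of the Cantor space `ℕ → Bool`.
-/

open Finset in
theorem sum_mem_achievementSet (x : ℕ → ℝ) (s : Finset ℕ) : ∑ n ∈ s, x n ∈ achievementSet x :=
  ⟨s, sum_eq_tsum_indicator x s⟩

theorem achievementSet_eq_range (x : ℕ → ℝ) :
    achievementSet x = range fun s : ℕ → Bool => ∑' n, if s n then x n else 0 := by
  ext y
  constructor
  · rintro ⟨A, rfl⟩
    classical
    exact ⟨fun n => decide (n ∈ A), by simp [Set.indicator_apply]⟩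
  · rintro ⟨s, rfl⟩
    exact ⟨{n | s n}, by simp [Set.indicator_apply]⟩

theorem isCompact_achievementSet {x : ℕ → ℝ} (hx : Summable x) :
    IsCompact (achievementSet x) := by
  rw [achievementSet_eq_range]
  refine isCompact_range (continuous_tsum (fun n => ?_) hx.abs fun n s => ?_)
  · exact (continuous_of_discreteTopology (f := fun b : Bool => if b then x n else 0)).comp
      (continuous_apply n)
  · split_ifs <;> simp

section mgSeq

variable {m : ℕ} {w : Fin (m + 1) → ℝ} {q : ℝ}

@[simp]
theorem mgSeq_mul_add (j : ℕ) (r : Fin (m + 1)) :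
    mgSeq m w q (j * (m + 1) + r) = w r * q ^ j := by
  have h : ∀ n, mgSeq m w q n =
      w (Nat.divModEquiv (m + 1) n).2 * q ^ (Nat.divModEquiv (m + 1) n).1 := fun n => rfl
  rw [h, ← Nat.divModEquiv_symm_apply (p := (j, r)), Equiv.apply_symm_apply]

theorem summable_mgSeq (hq : ‖q‖ < 1) : Summable (mgSeq m w q) := by
  rw [← (Nat.divModEquiv (m + 1)).symm.summable_iff]
  have := summable_mul_of_summable_norm (summable_norm_geometric_of_norm_lt_one hq)
    (Summable.of_finite (f := fun r : Fin (m + 1) => ‖w r‖))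
  refine (this.congr fun p => ?_)
  simp [mul_comm]

open Finset in
theorem sum_blockSum_mul_pow_mem_achievementSet (S : ℕ → Finset (Fin (m + 1))) (n : ℕ) :
    ∑ j ∈ range n, (∑ r ∈ S j, w r) * q ^ j ∈ achievementSet (mgSeq m w q) := by
  let e : (Σ _ : ℕ, Fin (m + 1)) ↪ ℕ :=
    ((Equiv.sigmaEquivProd ℕ (Fin (m + 1))).trans (Nat.divModEquiv (m + 1)).symm).toEmbedding
  convert sum_mem_achievementSet (mgSeq m w q) (((range n).sigma S).map e) using 1
  rw [sum_map, sum_sigma]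
  refine sum_congr rfl fun j _ => ?_
  rw [sum_mul]
  refine sum_congr rfl fun r _ => ?_
  simp [e]

end mgSeq

open Finset in
theorem exists_finset_sum_three_two_eq (m c : ℕ) (hc1 : c ≠ 1) (hc2 : c ≠ 2 * m + 2)
    (hc3 : c ≤ 2 * m + 3) :
    ∃ S : Finset (Fin (m + 1)), ∑ r ∈ S, (if r.val = 0 then (3 : ℝ) else 2) = c := by
  obtain ⟨δ, a, ha, hc⟩ : ∃ δ : Bool, ∃ a ≤ m, (c : ℝ) = (if δ then 3 else 0) + 2 * a := by
    rcases Nat.even_or_odd' c with ⟨a, rfl | rfl⟩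
    · exact ⟨false, a, by omega, by push_cast; ring⟩
    · exact ⟨true, a - 1, by omega, by rw [if_pos rfl, Nat.cast_sub (by omega)]; push_cast; ring⟩
  refine ⟨univ.filter fun r : Fin (m + 1) => if r.val = 0 then δ = true else r.val ≤ a, ?_⟩
  rw [sum_filter, Fin.sum_univ_succ, hc]
  simp only [Fin.val_zero, Fin.val_succ, if_true, Nat.add_one_ne_zero, if_false,
    Nat.add_one_le_iff]
  rw [← sum_filter, sum_const, Fin.card_filter_val_lt, min_eq_right ha, nsmul_eq_mul]
  cases δ <;> simp [mul_comm]

theorem exists_digit_step {b B N : ℕ} (hb : 3 ≤ b) (h₁ : 3 * (b * B) ≤ N + 1)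
    (h₂ : N < 4 * (b * B)) :
    ∃ M r, N = b * M + r ∧ (r ≠ 1 ∧ r ≠ b ∧ r ≤ b + 1) ∧ 3 * B ≤ M + 1 ∧ M < 4 * B := by
  have hN := Nat.div_add_mod N b
  have hR := Nat.mod_lt N (by omega : 0 < b)
  set Q := N / b
  set R := N % b
  have hQ : Q < 4 * B := Nat.lt_of_mul_lt_mul_left (a := b) (by linarith)
  by_cases hR1 : R = 1
  · have hQ3 : 3 * B < Q + 1 := Nat.lt_of_mul_lt_mul_left (a := b) (by linarith)
    refine ⟨Q - 1, b + 1, ?_, by omega, by omega, by omega⟩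
    have hQ1 : 1 ≤ Q := by nlinarith
    rw [hR1] at hN
    zify [hQ1] at hN ⊢
    linear_combination -hN
  · have hQ3 : 3 * B ≤ Q + 1 :=
      Nat.le_of_mul_le_mul_left (show b * (3 * B) ≤ b * (Q + 1) by linarith) (by omega)
    exact ⟨Q, R, hN.symm, ⟨hR1, by omega, by omega⟩, hQ3, hQ⟩

open Finset in
theorem exists_digit_expansion {b : ℕ} (hb : 4 ≤ b) (n N : ℕ) (h₁ : 3 * b ^ n ≤ N + 1)
    (h₂ : N < 4 * b ^ n) :
    ∃ c : ℕ → ℕ, (∀ j, c j ≠ 1 ∧ c j ≠ b ∧ c j ≤ b + 1) ∧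
      (N : ℝ) / b ^ n = ∑ j ∈ range (n + 1), (c j : ℝ) * (1 / b) ^ j := by
  induction n generalizing N with
  | zero =>
    simp only [pow_zero, mul_one] at h₁ h₂
    exact ⟨fun _ => N, fun _ => by dsimp only; omega, by simp⟩
  | succ n ih =>
    rw [pow_succ'] at h₁ h₂
    obtain ⟨M, r, rfl, hr, hM₁, hM₂⟩ := exists_digit_step (by omega) h₁ h₂
    obtain ⟨c, hc, hMc⟩ := ih M hM₁ hM₂
    refine ⟨Function.update c (n + 1) r, fun j => ?_, ?_⟩
    · rcases eq_or_ne j (n + 1) with rfl | hj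
      · simpa using hr
      · simpa [hj] using hc j
    rw [sum_range_succ, Function.update_self,
      sum_congr rfl fun j hj => by rw [Function.update_of_ne (by simp at hj; omega)], ← hMc]
    have : (b : ℝ) ≠ 0 := by positivity
    simp only [one_div, inv_pow]
    field_simp
    push_cast
    ring

theorem Icc_subset_closure_of_forall_div_pow_mem {S : Set ℝ} {a b c : ℕ} (ha : 0 < a)
    (hb : 1 < b)
    (h : ∀ n N : ℕ, a * b ^ n ≤ N + 1 → N < c * b ^ n → (N : ℝ) / b ^ n ∈ S) :
    Icc (a : ℝ) c ⊆ closure S := by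
  rintro y ⟨hay, hyc⟩
  rw [Metric.mem_closure_iff]
  intro ε hε
  obtain ⟨n, hn⟩ : ∃ n : ℕ, 1 / ε < (b : ℝ) ^ n :=
    pow_unbounded_of_one_lt _ (by exact_mod_cast hb)
  have hbn : (0 : ℝ) < b ^ n := by positivity
  have hbε : 1 / (b : ℝ) ^ n < ε := by rwa [div_lt_iff₀ hε, mul_comm, ← div_lt_iff₀ hbn] at hn
  set x := y * b ^ n with hx_def
  have hx : 0 < x := mul_pos ((Nat.cast_pos.mpr ha).trans_le hay) hbn
  have hM₁ : 1 ≤ ⌈x⌉₊ := Nat.one_le_iff_ne_zero.mpr (Nat.ceil_pos.mpr hx).ne'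
  have hax : a * b ^ n ≤ ⌈x⌉₊ := by
    have : ((a * b ^ n : ℕ) : ℝ) ≤ x := by push_cast; exact mul_le_mul_of_nonneg_right hay hbn.le
    exact_mod_cast this.trans (Nat.le_ceil x)
  have hxc : ⌈x⌉₊ ≤ c * b ^ n :=
    Nat.ceil_le.mpr (by push_cast; exact mul_le_mul_of_nonneg_right hyc hbn.le)
  refine ⟨_, h n (⌈x⌉₊ - 1) (by omega) (by omega), ?_⟩
  have hceil := Nat.ceil_lt_add_one hx.le
  have hle := Nat.le_ceil x
  have hdist : y - ((⌈x⌉₊ - 1 : ℕ) : ℝ) / b ^ n = (x - ⌈x⌉₊ + 1) / b ^ n := by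
    rw [Nat.cast_sub hM₁, hx_def]
    field_simp
    ring
  rw [Real.dist_eq, hdist, abs_of_pos (by apply div_pos <;> linarith)]
  calc (x - ⌈x⌉₊ + 1) / b ^ n ≤ 1 / b ^ n := by gcongr; linarith
    _ < ε := hbε

theorem stmt17 (k : ℕ) (hk : 1 ≤ k) :
    Set.Icc (3 : ℝ) 4 ⊆
      achievementSet (mgSeq k (fun i => if i.val = 0 then (3 : ℝ) else 2)
        (1 / (2 * k + 2 : ℝ))) := by
  set E := achievementSet (mgSeq k (fun i => if i.val = 0 then (3 : ℝ) else 2)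
    (1 / (2 * k + 2 : ℝ)))
  have hb : ((2 * k + 2 : ℕ) : ℝ) = 2 * k + 2 := by push_cast; ring
  have hq : ‖1 / (2 * k + 2 : ℝ)‖ < 1 := by
    rw [Real.norm_eq_abs, abs_of_pos (by positivity), div_lt_one (by positivity)]
    linarith [(Nat.cast_nonneg k : (0 : ℝ) ≤ k)]
  have hdigits : ∀ n N : ℕ, 3 * (2 * k + 2) ^ n ≤ N + 1 → N < 4 * (2 * k + 2) ^ n →
      (N : ℝ) / ((2 * k + 2 : ℕ) : ℝ) ^ n ∈ E := by
    intro n N h₁ h₂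
    obtain ⟨c, hc, hN⟩ := exists_digit_expansion (by omega) n N h₁ h₂
    choose S hS using fun j =>
      exists_finset_sum_three_two_eq k (c j) (hc j).1 (hc j).2.1 (by have := (hc j).2.2; omega)
    rw [hN, hb]
    simp_rw [← hS]
    exact sum_blockSum_mul_pow_mem_achievementSet S (n + 1)
  calc Icc (3 : ℝ) 4 = Icc ((3 : ℕ) : ℝ) ((4 : ℕ) : ℝ) := by norm_num
    _ ⊆ closure E := Icc_subset_closure_of_forall_div_pow_mem (by norm_num) (by omega) hdigits
    _ = E := (isCompact_achievementSet (summable_mgSeq hq)).isClosed.closure_eq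
end

section
/- Let k₁,…,k_m be positive integers, 0 < q < 1, and n₁,…,n_m nonnegative integers. Then the achievement set of the multigeometric sequence (q^{n₁}k₁, …, q^{n_m}k_m; q) is a finite union of translates of scaled copies of the achievement set of (k₁,…,k_m; q); in particular, E(6,1; 1/4) = (1/2)·E(3,2; 1/4) ∪ (1/2)·(E(3,2; 1/4) + 12). -/
/-!
If `ψ : ℕ → ℕ` is injective with cofinite range and `x' (ψ n) = c * x n`, then a subsum of `x'` over
`A` is its subsum over the finite set `L = ℕ \ range ψ` plus `c` times the subsum of `x` over
`ψ⁻¹ A`, and both parts can be prescribed independently; hence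
`E(x') = ⋃_{S ⊆ L} (∑_S x' + c E(x))`.
For multigeometric sequences, `ψ` moves each term of the `i`-th progression `d i` places further
along it, which works as soon as `k' i * q ^ d i = c * k i` for all `i`: take `d i = M - n_i` and
`c = q ^ M` with `M = max n_i`, or, for `(6, 1; 1/4)` against `(3, 2; 1/4)`, `d = (1, 0)` and
`c = 1/2`, where `L = {0}`.
-/

open Set

section Reindexing

variable {x x' : ℕ → ℝ} {ψ : ℕ → ℕ} {c : ℝ} {L : Finset ℕ}

theorem tsum_indicator_eq_sum_add_mul_tsum_s19 (hx' : Summable x') (hψ : ψ.Injective)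
    (hrel : ∀ n, x' (ψ n) = c * x n) (hL : (L : Set ℕ) = (range ψ)ᶜ) (A : Set ℕ) :
    ∑' n, A.indicator x' n = ∑ n ∈ L, A.indicator x' n + c * ∑' n, (ψ ⁻¹' A).indicator x n := by
  have hcomp : x' ∘ ψ = fun n => c * x n := funext hrel
  calc ∑' n, A.indicator x' n
      = ∑' n, (L : Set ℕ).indicator (A.indicator x') n +
          ∑' n, (range ψ).indicator (A.indicator x') n := by
        rw [← Summable.tsum_add ((hx'.indicator _).indicator _) ((hx'.indicator _).indicator _), hL]
        simp only [Set.indicator_compl_add_self_apply]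
    _ = ∑ n ∈ L, A.indicator x' n + ∑' n, A.indicator x' (ψ n) := by
        rw [← tsum_subtype, ← tsum_subtype, Finset.tsum_subtype', tsum_range _ hψ]
    _ = ∑ n ∈ L, A.indicator x' n + c * ∑' n, (ψ ⁻¹' A).indicator x n := by
        rw [← tsum_mul_left]
        simp only [← Set.indicator_comp_right, hcomp, Set.indicator_const_mul]

theorem achievementSet_eq_biUnion (hx' : Summable x') (hψ : ψ.Injective)
    (hrel : ∀ n, x' (ψ n) = c * x n) (hL : (L : Set ℕ) = (range ψ)ᶜ) :
    achievementSet x' =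
      ⋃ S ∈ L.powerset, (fun t => ∑ n ∈ S, x' n + c * t) '' achievementSet x := by
  classical
  have hLψ : ∀ n ∈ L, n ∉ range ψ := fun n hn => by rwa [← Finset.mem_coe, hL] at hn
  ext y
  simp only [achievementSet, Set.mem_iUnion, Set.mem_image, Finset.mem_powerset, Set.mem_ofPred_eq]
  constructor
  · rintro ⟨A, rfl⟩
    refine ⟨L.filter (· ∈ A), Finset.filter_subset _ _, _, ⟨ψ ⁻¹' A, rfl⟩, ?_⟩
    rw [tsum_indicator_eq_sum_add_mul_tsum_s19 hx' hψ hrel hL, Finset.sum_filter]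
    rfl
  · rintro ⟨S, hSL, _, ⟨B, rfl⟩, rfl⟩
    refine ⟨↑S ∪ ψ '' B, ?_⟩
    have hS : ∑ n ∈ L, (↑S ∪ ψ '' B).indicator x' n = ∑ n ∈ S, x' n := by
      rw [← Finset.sum_indicator_subset x' hSL]
      refine Finset.sum_congr rfl fun n hn => ?_
      have : n ∉ ψ '' B := fun ⟨b, _, hb⟩ => hLψ n hn ⟨b, hb⟩
      simp [Set.indicator_apply, this]
    have hB : ψ ⁻¹' (↑S ∪ ψ '' B) = B := by
      rw [Set.preimage_union, hψ.preimage_image, Set.union_eq_right]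
      exact fun n hn => (hLψ _ (hSL hn) ⟨n, rfl⟩).elim
    rw [tsum_indicator_eq_sum_add_mul_tsum_s19 hx' hψ hrel hL, hS, hB]

end Reindexing

theorem Finset.exists_fin_iUnion_eq_biUnion {α β : Type*} (s : Finset α) (f : α → Set β) :
    ∃ (N : ℕ) (g : Fin N → α), ⋃ i, f (g i) = ⋃ a ∈ s, f a := by
  refine ⟨s.card, fun i => s.equivFin.symm i, ?_⟩
  rw [s.equivFin.symm.surjective.iUnion_comp (fun a : s => f a), ← Finset.set_biUnion_coe,
    Set.biUnion_eq_iUnion]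
  rfl

theorem Fin.ofNat_add_mul (m n j : ℕ) :
    Fin.ofNat (m + 1) (n + (m + 1) * j) = Fin.ofNat (m + 1) n :=
  Fin.ext (by simp only [Fin.val_ofNat, Nat.add_mul_mod_self_left])

namespace mgSeq

variable {m : ℕ} {k k' : Fin (m + 1) → ℝ} {q : ℝ}

theorem apply (n : ℕ) : mgSeq m k q n = k (Fin.ofNat (m + 1) n) * q ^ (n / (m + 1)) := rfl

theorem summable (hk : ∀ i, 0 ≤ k i) (hq₀ : 0 ≤ q) (hq₁ : q < 1) : Summable (mgSeq m k q) := by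
  have hprod : Summable fun p : ℕ × Fin (m + 1) => q ^ p.1 * k p.2 :=
    (summable_geometric_of_lt_one hq₀ hq₁).mul_of_nonneg Summable.of_finite
      (fun j => pow_nonneg hq₀ j) hk
  convert (Nat.divModEquiv (m + 1)).summable_iff.2 hprod using 1
  ext n
  simp only [Function.comp_apply, Nat.divModEquiv_apply, apply, mul_comm]

def shift (m : ℕ) (d : Fin (m + 1) → ℕ) (n : ℕ) : ℕ := n + (m + 1) * d (Fin.ofNat (m + 1) n)

variable {d : Fin (m + 1) → ℕ}

theorem shift_injective : (shift m d).Injective := by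
  intro a b hab
  have hres : Fin.ofNat (m + 1) a = Fin.ofNat (m + 1) b := by
    rw [← Fin.ofNat_add_mul m a (d (Fin.ofNat (m + 1) a)),
      ← Fin.ofNat_add_mul m b (d (Fin.ofNat (m + 1) b))]
    exact congrArg _ hab
  simp only [shift, hres] at hab
  omega

theorem mem_range_shift {n : ℕ} :
    n ∈ range (shift m d) ↔ (m + 1) * d (Fin.ofNat (m + 1) n) ≤ n := by
  constructor
  · rintro ⟨a, rfl⟩
    simp only [shift, Fin.ofNat_add_mul, Nat.le_add_left]
  · intro h
    refine ⟨n - (m + 1) * d (Fin.ofNat (m + 1) n), ?_⟩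
    have hres :
        Fin.ofNat (m + 1) (n - (m + 1) * d (Fin.ofNat (m + 1) n)) = Fin.ofNat (m + 1) n := by
      conv_rhs => rw [← Nat.sub_add_cancel h]
      exact (Fin.ofNat_add_mul _ _ _).symm
    simp only [shift, hres]
    omega

theorem apply_add_mul (n j : ℕ) :
    mgSeq m k q (n + (m + 1) * j) = mgSeq m k q n * q ^ j := by
  simp only [apply, Fin.ofNat_add_mul, Nat.add_mul_div_left _ _ (Nat.succ_pos m), pow_add,
    mul_assoc]

theorem apply_shift {c : ℝ} (hrel : ∀ i, k' i * q ^ d i = c * k i) (n : ℕ) :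
    mgSeq m k' q (shift m d n) = c * mgSeq m k q n := by
  rw [shift, apply_add_mul, apply, apply, mul_right_comm, hrel, mul_assoc]

end mgSeq

theorem achievementSet_mgSeq_eq_biUnion {m : ℕ} {k k' : Fin (m + 1) → ℝ} {q c : ℝ}
    {d : Fin (m + 1) → ℕ} (hk' : ∀ i, 0 ≤ k' i) (hq₀ : 0 ≤ q) (hq₁ : q < 1)
    (hrel : ∀ i, k' i * q ^ d i = c * k i) (L : Finset ℕ)
    (hL : ∀ n, n ∈ L ↔ n < (m + 1) * d (Fin.ofNat (m + 1) n)) :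
    achievementSet (mgSeq m k' q) = ⋃ S ∈ L.powerset,
      (fun t => ∑ n ∈ S, mgSeq m k' q n + c * t) '' achievementSet (mgSeq m k q) := by
  refine achievementSet_eq_biUnion (mgSeq.summable hk' hq₀ hq₁) mgSeq.shift_injective
    (mgSeq.apply_shift hrel) ?_
  ext n
  simp only [Finset.mem_coe, hL, Set.mem_compl_iff, mgSeq.mem_range_shift, not_le]

theorem exists_finset_mem_iff_lt_mul {m : ℕ} (d : Fin (m + 1) → ℕ) :
    ∃ L : Finset ℕ, ∀ n, n ∈ L ↔ n < (m + 1) * d (Fin.ofNat (m + 1) n) := by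
  refine ⟨(Finset.range ((m + 1) * Finset.univ.sup d)).filter
    fun n => n < (m + 1) * d (Fin.ofNat (m + 1) n), fun n => ?_⟩
  have hle := Finset.le_sup (f := d) (Finset.mem_univ (Fin.ofNat (m + 1) n))
  simp only [Finset.mem_filter, Finset.mem_range, and_iff_right_iff_imp]
  intro h
  exact h.trans_le (Nat.mul_le_mul_left _ hle)

theorem exists_achievementSet_mgSeq_pow_mul_eq_iUnion {m : ℕ} {k : Fin (m + 1) → ℝ} {q : ℝ}
    (hk : ∀ i, 0 ≤ k i) (hq₀ : 0 ≤ q) (hq₁ : q < 1) (nn : Fin (m + 1) → ℕ) :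
    ∃ (N : ℕ) (a c : Fin N → ℝ), achievementSet (mgSeq m (fun i => q ^ nn i * k i) q) =
      ⋃ j, (fun t => a j + c j * t) '' achievementSet (mgSeq m k q) := by
  set M := Finset.univ.sup nn
  have hrel (i : Fin (m + 1)) : q ^ nn i * k i * q ^ (M - nn i) = q ^ M * k i := by
    rw [mul_right_comm, ← pow_add, Nat.add_sub_cancel' (Finset.le_sup (Finset.mem_univ i))]
  obtain ⟨L, hL⟩ := exists_finset_mem_iff_lt_mul fun i => M - nn i
  obtain ⟨N, g, hg⟩ := L.powerset.exists_fin_iUnion_eq_biUnion fun S =>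
    (fun t => ∑ n ∈ S, mgSeq m (fun i => q ^ nn i * k i) q n + q ^ M * t) ''
      achievementSet (mgSeq m k q)
  refine ⟨N, fun j => ∑ n ∈ g j, mgSeq m (fun i => q ^ nn i * k i) q n, fun _ => q ^ M, ?_⟩
  rw [hg]
  exact achievementSet_mgSeq_eq_biUnion (fun i => mul_nonneg (pow_nonneg hq₀ _) (hk i)) hq₀ hq₁
    hrel L hL

theorem achievementSet_mgSeq_six_one :
    achievementSet (mgSeq 1 ![6, 1] (1 / 4)) =
      (fun t => (1 / 2 : ℝ) * t) '' achievementSet (mgSeq 1 ![3, 2] (1 / 4)) ∪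
      (fun t => (1 / 2 : ℝ) * (t + 12)) '' achievementSet (mgSeq 1 ![3, 2] (1 / 4)) := by
  have hrel (i : Fin 2) : (![6, 1] : Fin 2 → ℝ) i * (1 / 4) ^ (![1, 0] : Fin 2 → ℕ) i =
      1 / 2 * (![3, 2] : Fin 2 → ℝ) i := by
    fin_cases i <;> norm_num
  have hL (n : ℕ) : n ∈ ({0} : Finset ℕ) ↔ n < 2 * (![1, 0] : Fin 2 → ℕ) (Fin.ofNat 2 n) := by
    rw [Finset.mem_singleton]
    rcases Nat.mod_two_eq_zero_or_one n with h | h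
    · rw [show Fin.ofNat 2 n = 0 from Fin.ext h, Matrix.cons_val_zero]
      omega
    · rw [show Fin.ofNat 2 n = 1 from Fin.ext h, Matrix.cons_val_one, Matrix.cons_val_fin_one]
      omega
  have h6 : mgSeq 1 ![6, 1] (1 / 4 : ℝ) 0 = 6 := by norm_num [mgSeq.apply]
  rw [achievementSet_mgSeq_eq_biUnion (by simp [Fin.forall_fin_two]) (by norm_num) (by norm_num)
    hrel {0} hL]
  simp only [Finset.mem_powerset, Finset.subset_singleton_iff, iUnion_iUnion_eq_or_left,
    Finset.sum_empty, zero_add, iUnion_iUnion_eq_left, Finset.sum_singleton, h6]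
  congr 2
  funext t
  ring

theorem stmt19 :
    (∀ (m : ℕ) (k : Fin (m + 1) → ℕ) (_ : ∀ i, 0 < k i) (q : ℝ) (_ : 0 < q) (_ : q < 1)
      (nn : Fin (m + 1) → ℕ),
      ∃ (N : ℕ) (a c : Fin N → ℝ),
        achievementSet (mgSeq m (fun i => q ^ (nn i) * (k i : ℝ)) q) =
          ⋃ i, (fun t => a i + c i * t) '' achievementSet (mgSeq m (fun i => (k i : ℝ)) q)) ∧
    achievementSet (mgSeq 1 ![6, 1] (1 / 4)) =
      (fun t => (1 / 2 : ℝ) * t) '' achievementSet (mgSeq 1 ![3, 2] (1 / 4)) ∪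
      (fun t => (1 / 2 : ℝ) * (t + 12)) '' achievementSet (mgSeq 1 ![3, 2] (1 / 4)) :=
  ⟨fun _ _ _ _ hq₀ hq₁ nn =>
    exists_achievementSet_mgSeq_pow_mul_eq_iUnion (fun _ => Nat.cast_nonneg _) hq₀.le hq₁ nn,
    achievementSet_mgSeq_six_one⟩
end
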